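/- For every positive integer k and every i ∈ {1,...,k}, the number 4·cos²(πi/(2k+1)) is a signless Laplacian eigenvalue of any graph G with multiplicity at least p_k(G) − q_k(G). -/

import Mathlib

open Matrix SimpleGraph Real

noncomputable def mult {m : Type*} [Fintype m] [DecidableEq m]
    (M : Matrix m m ℝ) (μ : ℝ) : ℕ :=
  Module.finrank ℝ (Module.End.eigenspace (Matrix.toLin' M) μ)

/-- A pendant path of length `k`, recorded as its sequence of vertices from the pendant
end `w 0` (degree one) through internal vertices of degree two to the attachment vertex
`w (Fin.last k)` of degree greater than two. -/
def IsPendantPath {n : ℕ} (G : SimpleGraph (Fin n)) [DecidableRel G.Adj] (k : ℕ)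
    (w : Fin (k + 1) → Fin n) : Prop :=
  Function.Injective w ∧
  (∀ i : Fin k, G.Adj (w i.castSucc) (w i.succ)) ∧
  G.degree (w 0) = 1 ∧
  (∀ i : Fin (k + 1), i ≠ 0 → i ≠ Fin.last k → G.degree (w i) = 2) ∧
  2 < G.degree (w (Fin.last k))

/-- `pk G k` is the number of pendant paths of length `k` in `G`. -/
noncomputable def pk {n : ℕ} (G : SimpleGraph (Fin n)) [DecidableRel G.Adj] (k : ℕ) : ℕ :=
  Nat.card {w : Fin (k + 1) → Fin n // IsPendantPath G k w}

/-- `qk G k` is the number of vertices of degree greater than two that are end vertices of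
some pendant path of length `k` in `G`. -/
noncomputable def qk {n : ℕ} (G : SimpleGraph (Fin n)) [DecidableRel G.Adj] (k : ℕ) : ℕ :=
  Nat.card {v : Fin n // 2 < G.degree v ∧
    ∃ w : Fin (k + 1) → Fin n, IsPendantPath G k w ∧ w (Fin.last k) = v}

/-!
Let `w₀ … w_k` be a pendant path (`w₀` pendant, `w_k` the attachment vertex), `θ = π i / (2k+1)`
and `μ = 4 cos² θ`. Put `sin ((2j+1) θ)` on `w_j` and `0` elsewhere. Since `sin ((2k+1) θ) = 0`,
this vector vanishes at `w_k`, and the identity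
`sin (t - 2θ) + 2 sin t + sin (t + 2θ) = 4 cos² θ sin t` makes it satisfy `Q x = μ x` at every
vertex except `w_k`. So `Q - μ` maps the span of these `p_k` vectors, which are independent (each
is the only one not vanishing at its own pendant vertex), into the `q_k`-dimensional space of
vectors supported on attachment vertices; by rank–nullity the kernel of this restriction, which
lies in the `μ`-eigenspace, has dimension at least `p_k - q_k`.
-/

open Module Submodule in
theorem natCard_sub_natCard_le_finrank_ker {K V W ι κ : Type*} [Field K] [AddCommGroup V]
    [Module K V] [FiniteDimensional K V] [AddCommGroup W] [Module K W] [Finite ι] [Finite κ]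
    (f : V →ₗ[K] W) {x : ι → V} (hx : LinearIndependent K x) (y : κ → W)
    (hxy : ∀ i, f (x i) ∈ span K (Set.range y)) :
    Nat.card ι - Nat.card κ ≤ finrank K (LinearMap.ker f) := by
  have := Fintype.ofFinite ι
  have := Fintype.ofFinite κ
  have := FiniteDimensional.span_of_finite K (Set.finite_range y)
  set S := span K (Set.range x)
  set g := f ∘ₗ S.subtype
  have hrange : finrank K (LinearMap.range g) ≤ Nat.card κ := by
    refine (finrank_mono ?_).trans ((finrank_range_le_card y).trans Nat.card_eq_fintype_card.ge)
    rw [LinearMap.range_comp, range_subtype, map_span, span_le]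
    rintro _ ⟨_, ⟨i, rfl⟩, rfl⟩
    exact hxy i
  have hker : finrank K (LinearMap.ker g) ≤ finrank K (LinearMap.ker f) := by
    rw [LinearMap.ker_comp, ← finrank_map_subtype_eq]
    exact finrank_mono (map_comap_le _ _)
  have hS : finrank K S = Nat.card ι :=
    (finrank_span_eq_card hx).trans Nat.card_eq_fintype_card.symm
  have := LinearMap.finrank_range_add_finrank_ker g
  omega

theorem linearIndependent_of_apply_eq_ite {K ι α : Type*} [Ring K] [NoZeroDivisors K]
    [DecidableEq ι] {x : ι → α → K} (p : ι → α) {c : K} (hc : c ≠ 0)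
    (h : ∀ i j, x i (p j) = if i = j then c else 0) : LinearIndependent K x := by
  rw [linearIndependent_iff']
  intro s g hg j hj
  have := congrFun hg (p j)
  simp only [Finset.sum_apply, Pi.smul_apply, smul_eq_mul, h, mul_ite, mul_zero,
    Finset.sum_ite_eq', if_pos hj, Pi.zero_apply] at this
  exact (mul_eq_zero.mp this).resolve_right hc

/-- `w` read as a sequence indexed by `ℕ`, constant equal to `w k` beyond `k`. -/
def pathAt {α : Type*} {k : ℕ} (w : Fin (k + 1) → α) (m : ℕ) : α :=
  w ⟨min m k, Nat.lt_succ_of_le (min_le_right m k)⟩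

section pathAt

variable {α : Type*} {k : ℕ} (w : Fin (k + 1) → α)

lemma pathAt_of_le {m : ℕ} (hm : m ≤ k) : pathAt w m = w ⟨m, Nat.lt_succ_of_le hm⟩ :=
  congrArg w (Fin.ext (min_eq_left hm))

@[simp]
lemma pathAt_val (j : Fin (k + 1)) : pathAt w j = w j :=
  pathAt_of_le w (Nat.lt_succ_iff.mp j.isLt)

@[simp]
lemma pathAt_zero : pathAt w 0 = w 0 := pathAt_val w 0

end pathAt

namespace IsPendantPath

variable {n k : ℕ} {G : SimpleGraph (Fin n)} [DecidableRel G.Adj] {w : Fin (k + 1) → Fin n}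

lemma pathAt_ne (hw : IsPendantPath G k w) {m l : ℕ} (hm : m ≤ k) (hl : l ≤ k)
    (hml : m ≠ l) : pathAt w m ≠ pathAt w l := by
  rw [pathAt_of_le w hm, pathAt_of_le w hl]
  exact hw.1.ne (Fin.ne_of_val_ne hml)

lemma adj_pathAt (hw : IsPendantPath G k w) {m : ℕ} (hm : m < k) :
    G.Adj (pathAt w m) (pathAt w (m + 1)) := by
  rw [pathAt_of_le w hm.le, pathAt_of_le w hm]
  exact hw.2.1 ⟨m, hm⟩

lemma degree_pathAt_of_pos (hw : IsPendantPath G k w) {m : ℕ} (h0 : 0 < m) (hm : m < k) :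
    G.degree (pathAt w m) = 2 := by
  rw [pathAt_of_le w hm.le]
  exact hw.2.2.2.1 _ (Fin.ne_of_val_ne h0.ne') (Fin.ne_of_val_ne hm.ne)

lemma degree_pathAt_zero (hw : IsPendantPath G k w) : G.degree (pathAt w 0) = 1 := by
  rw [pathAt_zero]
  exact hw.2.2.1

lemma neighborFinset_pathAt_zero (hw : IsPendantPath G k w) (hk : 0 < k) :
    G.neighborFinset (pathAt w 0) = {pathAt w 1} := by
  refine (Finset.eq_of_subset_of_card_le ?_ ?_).symm
  · simpa using hw.adj_pathAt hk
  · rw [card_neighborFinset_eq_degree, hw.degree_pathAt_zero, Finset.card_singleton]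

lemma neighborFinset_pathAt_succ (hw : IsPendantPath G k w) {m : ℕ} (hm : m + 1 < k) :
    G.neighborFinset (pathAt w (m + 1)) = {pathAt w m, pathAt w (m + 2)} := by
  refine (Finset.eq_of_subset_of_card_le ?_ ?_).symm
  · simp only [Finset.insert_subset_iff, Finset.singleton_subset_iff, mem_neighborFinset]
    exact ⟨(hw.adj_pathAt (by omega)).symm, hw.adj_pathAt hm⟩
  · rw [card_neighborFinset_eq_degree, hw.degree_pathAt_of_pos m.succ_pos hm,
      Finset.card_pair (hw.pathAt_ne (by omega) (by omega) (by omega))]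

lemma mem_range_of_adj_pathAt (hw : IsPendantPath G k w) {m : ℕ} (hm : m < k) {u : Fin n}
    (hu : G.Adj (pathAt w m) u) : u ∈ Set.range w := by
  rw [← mem_neighborFinset] at hu
  obtain _ | m := m
  · rw [hw.neighborFinset_pathAt_zero hm, Finset.mem_singleton] at hu
    exact hu ▸ ⟨_, (pathAt_of_le w hm).symm⟩
  · rw [hw.neighborFinset_pathAt_succ hm, Finset.mem_insert, Finset.mem_singleton] at hu
    rcases hu with rfl | rfl <;> exact ⟨_, (pathAt_of_le w (by omega)).symm⟩

lemma eq_of_apply_zero_eq {w' : Fin (k + 1) → Fin n} (hw : IsPendantPath G k w)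
    (hw' : IsPendantPath G k w') (hk : 0 < k) (h : w 0 = w' 0) : w = w' := by
  have h0 : pathAt w 0 = pathAt w' 0 := by simpa using h
  have step : ∀ m, m + 1 ≤ k →
      pathAt w m = pathAt w' m ∧ pathAt w (m + 1) = pathAt w' (m + 1) := by
    intro m hm
    induction m with
    | zero =>
      have h1 : pathAt w' 1 ∈ G.neighborFinset (pathAt w 0) := by
        rw [h0, mem_neighborFinset]; exact hw'.adj_pathAt hk
      rw [hw.neighborFinset_pathAt_zero hk, Finset.mem_singleton] at h1
      exact ⟨h0, h1.symm⟩
    | succ m ih =>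
      obtain ⟨e0, e1⟩ := ih (by omega)
      have h2 : pathAt w' (m + 2) ∈ G.neighborFinset (pathAt w (m + 1)) := by
        rw [e1, mem_neighborFinset]; exact hw'.adj_pathAt hm
      rw [hw.neighborFinset_pathAt_succ hm, Finset.mem_insert, Finset.mem_singleton, e0] at h2
      exact ⟨e1, (h2.resolve_left (hw'.pathAt_ne (by omega) (by omega) (by omega))).symm⟩
  funext j
  rw [← pathAt_val w, ← pathAt_val w']
  obtain ⟨_ | m, hj⟩ := j
  · exact h0
  · exact (step m (by omega)).2

end IsPendantPath

/-- The eigenvalue equations `Q x = μ x` at the degree-one and degree-two vertices of a pendant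
path of length `k`, for the vector taking the value `a j` at the `j`-th vertex and `0` at the
attachment vertex. -/
structure IsPendantEigenSequence (k : ℕ) (μ : ℝ) (a : ℕ → ℝ) : Prop where
  apply_last : a k = 0
  pendant : a 0 + a 1 = μ * a 0
  recurrence : ∀ m, a m + 2 * a (m + 1) + a (m + 2) = μ * a (m + 1)

theorem four_mul_cos_sq_mul_sin (t θ : ℝ) :
    4 * cos θ ^ 2 * sin t = sin (t - 2 * θ) + 2 * sin t + sin (t + 2 * θ) := by
  rw [sin_sub, sin_add, cos_sq θ]
  ring

theorem isPendantEigenSequence_sin {k : ℕ} {θ : ℝ} (h : sin ((2 * k + 1) * θ) = 0) :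
    IsPendantEigenSequence k (4 * cos θ ^ 2) fun m => sin ((2 * m + 1) * θ) where
  apply_last := h
  pendant := by
    rw [four_mul_cos_sq_mul_sin, show (2 * ((0 : ℕ) : ℝ) + 1) * θ - 2 * θ = -θ by push_cast; ring,
      sin_neg]
    push_cast
    ring_nf
  recurrence m := by
    rw [four_mul_cos_sq_mul_sin]
    push_cast
    ring_nf

noncomputable def pendantVector {n k : ℕ} (w : Fin (k + 1) → Fin n) (a : ℕ → ℝ) :
    Fin n → ℝ :=
  Function.extend w (fun j => a j) 0

section pendantVector

variable {n k : ℕ} {w : Fin (k + 1) → Fin n} (a : ℕ → ℝ)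

lemma pendantVector_pathAt (hw : Function.Injective w) {m : ℕ} (hm : m ≤ k) :
    pendantVector w a (pathAt w m) = a m := by
  rw [pathAt_of_le w hm, pendantVector, hw.extend_apply]

lemma pendantVector_apply_of_notMem_range {v : Fin n} (hv : v ∉ Set.range w) :
    pendantVector w a v = 0 :=
  Function.extend_apply' _ _ _ hv

end pendantVector

namespace IsPendantPath

variable {n k : ℕ} {G : SimpleGraph (Fin n)} [DecidableRel G.Adj] {w : Fin (k + 1) → Fin n}

lemma signlessLaplacian_mulVec_pendantVector_apply (hw : IsPendantPath G k w) {μ : ℝ}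
    {a : ℕ → ℝ} (ha : IsPendantEigenSequence k μ a) {v : Fin n}
    (hv : v ≠ w (Fin.last k)) :
    ((G.degMatrix ℝ + G.adjMatrix ℝ) *ᵥ pendantVector w a) v = μ * pendantVector w a v := by
  rw [add_mulVec, Pi.add_apply, degMatrix_mulVec_apply, adjMatrix_mulVec_apply]
  by_cases hvw : v ∈ Set.range w
  · obtain ⟨⟨m, hm⟩, rfl⟩ := hvw
    have hj : m < k := Fin.val_lt_last fun h => hv (congrArg w h)
    rw [← pathAt_of_le w hj.le]
    cases m with
    | zero =>
      rw [hw.neighborFinset_pathAt_zero hj, Finset.sum_singleton, hw.degree_pathAt_zero,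
        pendantVector_pathAt a hw.1 (Nat.zero_le k), pendantVector_pathAt a hw.1 hj]
      push_cast
      linarith [ha.pendant]
    | succ m =>
      rw [hw.neighborFinset_pathAt_succ hj,
        Finset.sum_pair (hw.pathAt_ne (by omega) (by omega) (by omega)),
        hw.degree_pathAt_of_pos m.succ_pos hj, pendantVector_pathAt a hw.1 hj.le,
        pendantVector_pathAt a hw.1 (by omega),
        pendantVector_pathAt a hw.1 (by omega)]
      push_cast
      linarith [ha.recurrence m]
  · rw [pendantVector_apply_of_notMem_range a hvw, mul_zero, mul_zero, zero_add]
    refine Finset.sum_eq_zero fun u hu => ?_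
    by_cases huw : u ∈ Set.range w
    · obtain ⟨⟨j, hj⟩, rfl⟩ := huw
      rw [← pathAt_of_le w (Nat.lt_succ_iff.mp hj)] at hu ⊢
      rw [pendantVector_pathAt a hw.1 (Nat.lt_succ_iff.mp hj)]
      rcases (Nat.lt_succ_iff.mp hj).lt_or_eq with hjk | rfl
      · rw [mem_neighborFinset] at hu
        exact absurd (hw.mem_range_of_adj_pathAt hjk hu.symm) hvw
      · exact ha.apply_last
    · exact pendantVector_apply_of_notMem_range a huw

lemma signlessLaplacian_mulVec_pendantVector_sub_mem_span (hw : IsPendantPath G k w) {μ : ℝ}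
    {a : ℕ → ℝ} (ha : IsPendantEigenSequence k μ a) :
    (G.degMatrix ℝ + G.adjMatrix ℝ) *ᵥ pendantVector w a - μ • pendantVector w a ∈
      Submodule.span ℝ {Pi.single (w (Fin.last k)) 1} := by
  set r := (G.degMatrix ℝ + G.adjMatrix ℝ) *ᵥ pendantVector w a - μ • pendantVector w a
  rw [Submodule.mem_span_singleton]
  refine ⟨r (w (Fin.last k)), funext fun v => ?_⟩
  by_cases hv : v = w (Fin.last k)
  · subst hv
    simp
  · simp [r, hv, hw.signlessLaplacian_mulVec_pendantVector_apply ha hv]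

lemma pendantVector_apply_zero {w' : Fin (k + 1) → Fin n} (hw : IsPendantPath G k w)
    (hw' : IsPendantPath G k w') (hk : 0 < k) {a : ℕ → ℝ} (hak : a k = 0) :
    pendantVector w a (w' 0) = if w = w' then a 0 else 0 := by
  split_ifs with h
  · subst h
    rw [← pathAt_zero w, pendantVector_pathAt a hw.1 (Nat.zero_le k)]
  by_cases hr : w' 0 ∈ Set.range w
  · obtain ⟨⟨j, hj⟩, hj'⟩ := hr
    have hjk : j ≤ k := Nat.lt_succ_iff.mp hj
    rw [← hj', ← pathAt_of_le w hjk, pendantVector_pathAt a hw.1 hjk]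
    rcases Nat.eq_zero_or_pos j with rfl | hj0
    · exact absurd (hw.eq_of_apply_zero_eq hw' hk hj') h
    rcases hjk.lt_or_eq with hjk | rfl
    · have := hw.degree_pathAt_of_pos hj0 hjk
      rw [pathAt_of_le w hjk.le, hj', hw'.2.2.1] at this
      omega
    · exact hak
  · exact pendantVector_apply_of_notMem_range a hr

end IsPendantPath

theorem sin_pi_mul_div_pos {i k : ℕ} (hi : 1 ≤ i) (hik : i ≤ k) :
    0 < sin (π * i / (2 * k + 1)) := by
  apply sin_pos_of_pos_of_lt_pi (by positivity)
  rw [div_lt_iff₀ (by positivity)]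
  nlinarith [pi_pos, (Nat.cast_le.2 hik : (i : ℝ) ≤ k)]

theorem stmt9_general {n : ℕ} (G : SimpleGraph (Fin n)) [DecidableRel G.Adj]
    (k i : ℕ) (hi1 : 1 ≤ i) (hik : i ≤ k) :
    pk G k - qk G k ≤
      mult (G.degMatrix ℝ + G.adjMatrix ℝ) (4 * Real.cos (Real.pi * i / (2 * k + 1)) ^ 2) := by
  have hk : 0 < k := by omega
  set θ := π * i / (2 * k + 1) with hθ
  set μ := 4 * cos θ ^ 2
  set a : ℕ → ℝ := fun m => sin ((2 * m + 1) * θ)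
  have ha : IsPendantEigenSequence k μ a := isPendantEigenSequence_sin <| by
    rw [show (2 * (k : ℝ) + 1) * θ = i * π by rw [hθ]; field_simp]
    exact sin_nat_mul_pi i
  have ha0 : a 0 ≠ 0 := by simpa [a] using (sin_pi_mul_div_pos hi1 hik).ne'
  let x : {w // IsPendantPath G k w} → Fin n → ℝ := fun w => pendantVector w.1 a
  let y (v : {v // 2 < G.degree v ∧ ∃ w, IsPendantPath G k w ∧ w (Fin.last k) = v}) :
      Fin n → ℝ := Pi.single v.1 1
  have hx : LinearIndependent ℝ x :=
    linearIndependent_of_apply_eq_ite (fun w => w.1 0) ha0 fun w w' => by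
      simpa [Subtype.ext_iff] using w.2.pendantVector_apply_zero w'.2 hk ha.apply_last
  have hxy : ∀ w, (toLin' (G.degMatrix ℝ + G.adjMatrix ℝ) - μ • 1) (x w) ∈
      Submodule.span ℝ (Set.range y) := by
    intro w
    simp only [LinearMap.sub_apply, toLin'_apply, LinearMap.smul_apply, Module.End.one_apply]
    refine Submodule.span_mono ?_ (w.2.signlessLaplacian_mulVec_pendantVector_sub_mem_span ha)
    exact Set.singleton_subset_iff.2 ⟨⟨_, w.2.2.2.2.2, w.1, w.2, rfl⟩, rfl⟩
  rw [mult, Module.End.eigenspace_def]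
  exact natCard_sub_natCard_le_finrank_ker _ hx y hxy

theorem stmt9 {n : ℕ} (G : SimpleGraph (Fin n)) [DecidableRel G.Adj]
    (k i : ℕ) (hk : 1 ≤ k) (hi1 : 1 ≤ i) (hik : i ≤ k) :
    pk G k - qk G k ≤
      mult (G.degMatrix ℝ + G.adjMatrix ℝ) (4 * Real.cos (Real.pi * i / (2 * k + 1)) ^ 2) :=
  stmt9_general G k i hi1 hik
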